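/- For A-bounded operators T, S, the infimum inf_{γ∈ℂ} ‖T + γS‖_A is attained: there exists ζ₀ ∈ ℂ with ‖T + ζ₀S‖_A = inf_{γ∈ℂ} ‖T + γS‖_A. -/

import Mathlib

noncomputable section

open Filter Topology

variable {H : Type*} [NormedAddCommGroup H] [InnerProductSpace ℂ H]

/-- The semi-inner product induced by `A`: `⟨x, y⟩_A = ⟨A x, y⟩`. -/
def innerA (A : H →L[ℂ] H) (x y : H) : ℂ := @inner ℂ _ _ (A x) y

/-- The seminorm induced by `A`: `‖x‖_A = √⟨A x, x⟩`. -/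
def normA (A : H →L[ℂ] H) (x : H) : ℝ := Real.sqrt (innerA A x x).re

/-- The operator seminorm induced by `A`. -/
def opNormA (A T : H →L[ℂ] H) : ℝ :=
  sSup {r : ℝ | ∃ x : H, normA A x = 1 ∧ r = normA A (T x)}

/-- `T` is `A`-bounded. -/
def ABounded (A T : H →L[ℂ] H) : Prop :=
  ∃ c > 0, ∀ x : H, normA A (T x) ≤ c * normA A x

/-!
Writing `‖x‖_A = ‖A^{1/2} x‖`, the operator seminorm `‖·‖_A` is subadditive and
absolutely homogeneous on `A`-bounded operators. Hence `f γ = ‖T + γ S‖_A` is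
`‖S‖_A`-Lipschitz, and `‖γ‖ ‖S‖_A ≤ f γ + ‖T‖_A`. If `‖S‖_A = 0` then `f` is constant; otherwise
`f γ ≥ f 0` outside a compact disc. Either way the continuous function `f` attains its infimum.
-/

section Seminorm

variable {A : H →L[ℂ] H}

lemma normA_eq_norm_sqrt [CompleteSpace H] (hA : A.IsPositive) (x : H) :
    normA A x = ‖CFC.sqrt A x‖ := by
  have hA' : 0 ≤ A := (ContinuousLinearMap.nonneg_iff_isPositive A).mpr hA
  have hsa : IsSelfAdjoint (CFC.sqrt A) := (CFC.sqrt_nonneg A).isSelfAdjoint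
  have hinner : innerA A x x = ((‖CFC.sqrt A x‖ ^ 2 : ℝ) : ℂ) := by
    conv_lhs => rw [innerA, ← CFC.sqrt_mul_sqrt_self A]
    rw [mul_apply_eq_comp, ← ContinuousLinearMap.adjoint_inner_right, hsa.adjoint_eq,
      inner_self_eq_norm_sq_to_K]
    simp
  rw [normA, hinner, Complex.ofReal_re, Real.sqrt_sq (norm_nonneg _)]

lemma normA_nonneg (x : H) : 0 ≤ normA A x := Real.sqrt_nonneg _

lemma normA_smul (c : ℂ) (x : H) : normA A (c • x) = ‖c‖ * normA A x := by
  rw [normA, normA, innerA, innerA, map_smul, inner_smul_left, inner_smul_right, ← mul_assoc,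
    Complex.conj_mul', ← Complex.ofReal_pow, Complex.re_ofReal_mul,
    Real.sqrt_mul (by positivity), Real.sqrt_sq (norm_nonneg c)]

lemma normA_add_le [CompleteSpace H] (hA : A.IsPositive) (x y : H) :
    normA A (x + y) ≤ normA A x + normA A y := by
  simp only [normA_eq_norm_sqrt hA, map_add]
  exact norm_add_le _ _

end Seminorm

section OperatorSeminorm

variable {A U V : H →L[ℂ] H}

lemma ABounded.add [CompleteSpace H] (hA : A.IsPositive) (hU : ABounded A U)
    (hV : ABounded A V) : ABounded A (U + V) := by
  obtain ⟨c, hc, hUc⟩ := hU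
  obtain ⟨d, hd, hVd⟩ := hV
  refine ⟨c + d, add_pos hc hd, fun x => ?_⟩
  calc normA A ((U + V) x) ≤ normA A (U x) + normA A (V x) := normA_add_le hA _ _
    _ ≤ c * normA A x + d * normA A x := add_le_add (hUc x) (hVd x)
    _ = (c + d) * normA A x := by ring

lemma ABounded.smul (hU : ABounded A U) (a : ℂ) : ABounded A (a • U) := by
  obtain ⟨c, hc, hUc⟩ := hU
  refine ⟨(‖a‖ + 1) * c, by positivity, fun x => ?_⟩
  calc normA A ((a • U) x) = ‖a‖ * normA A (U x) := normA_smul a (U x)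
    _ ≤ ‖a‖ * (c * normA A x) := by gcongr; exact hUc x
    _ ≤ (‖a‖ + 1) * c * normA A x := by nlinarith [normA_nonneg (A := A) x]

lemma le_opNormA (hU : ABounded A U) {x : H} (hx : normA A x = 1) :
    normA A (U x) ≤ opNormA A U := by
  obtain ⟨c, -, hUc⟩ := hU
  refine le_csSup ⟨c, ?_⟩ ⟨x, hx, rfl⟩
  rintro r ⟨y, hy, rfl⟩
  simpa [hy] using hUc y

lemma opNormA_nonneg : 0 ≤ opNormA A U :=
  Real.sSup_nonneg fun _ ⟨_, _, hr⟩ => hr ▸ normA_nonneg _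

lemma opNormA_add_le [CompleteSpace H] (hA : A.IsPositive) (hU : ABounded A U)
    (hV : ABounded A V) : opNormA A (U + V) ≤ opNormA A U + opNormA A V := by
  refine Real.sSup_le ?_ (add_nonneg opNormA_nonneg opNormA_nonneg)
  rintro r ⟨x, hx, rfl⟩
  calc normA A ((U + V) x) ≤ normA A (U x) + normA A (V x) := normA_add_le hA _ _
    _ ≤ opNormA A U + opNormA A V := add_le_add (le_opNormA hU hx) (le_opNormA hV hx)

open scoped Pointwise in
lemma opNormA_smul (a : ℂ) (U : H →L[ℂ] H) : opNormA A (a • U) = ‖a‖ * opNormA A U := by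
  have hset : {r : ℝ | ∃ x : H, normA A x = 1 ∧ r = normA A ((a • U) x)}
      = ‖a‖ • {r : ℝ | ∃ x : H, normA A x = 1 ∧ r = normA A (U x)} := by
    ext r
    simp [Set.mem_smul_set, normA_smul, eq_comm]
  rw [opNormA, hset, Real.sSup_smul_of_nonneg (norm_nonneg a), smul_eq_mul, opNormA]

end OperatorSeminorm

section Pencil

variable [CompleteSpace H] {A T S : H →L[ℂ] H}

lemma opNormA_pencil_le (hA : A.IsPositive) (hT : ABounded A T) (hS : ABounded A S)
    (γ γ' : ℂ) :
    opNormA A (T + γ • S) ≤ opNormA A (T + γ' • S) + opNormA A S * dist γ γ' := by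
  have hsplit : T + γ • S = (T + γ' • S) + (γ - γ') • S := by
    rw [sub_smul]; abel
  calc opNormA A (T + γ • S) = opNormA A ((T + γ' • S) + (γ - γ') • S) := congrArg _ hsplit
    _ ≤ opNormA A (T + γ' • S) + opNormA A ((γ - γ') • S) :=
        opNormA_add_le hA (hT.add hA (hS.smul γ')) (hS.smul _)
    _ = opNormA A (T + γ' • S) + opNormA A S * dist γ γ' := by
        rw [opNormA_smul, dist_eq_norm, mul_comm]

lemma lipschitzWith_opNormA_pencil (hA : A.IsPositive) (hT : ABounded A T)
    (hS : ABounded A S) :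
    LipschitzWith ⟨opNormA A S, opNormA_nonneg⟩ fun γ : ℂ => opNormA A (T + γ • S) :=
  LipschitzWith.of_le_add_mul _ (opNormA_pencil_le hA hT hS)

lemma norm_mul_opNormA_le_pencil (hA : A.IsPositive) (hT : ABounded A T)
    (hS : ABounded A S) (γ : ℂ) :
    ‖γ‖ * opNormA A S ≤ opNormA A (T + γ • S) + opNormA A T := by
  have hsplit : γ • S = (T + γ • S) + (-1 : ℂ) • T := by
    rw [neg_one_smul]; abel
  calc ‖γ‖ * opNormA A S = opNormA A (γ • S) := (opNormA_smul γ S).symm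
    _ = opNormA A ((T + γ • S) + (-1 : ℂ) • T) := congrArg _ hsplit
    _ ≤ opNormA A (T + γ • S) + opNormA A ((-1 : ℂ) • T) :=
        opNormA_add_le hA (hT.add hA (hS.smul γ)) (hT.smul _)
    _ = opNormA A (T + γ • S) + opNormA A T := by
        rw [opNormA_smul, norm_neg, norm_one, one_mul]

lemma eventually_opNormA_le_pencil (hA : A.IsPositive) (hT : ABounded A T)
    (hS : ABounded A S) :
    ∀ᶠ γ in cocompact ℂ, opNormA A T ≤ opNormA A (T + γ • S) := by
  rcases (opNormA_nonneg (A := A) (U := S)).eq_or_lt with hS0 | hSpos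
  · refine Eventually.of_forall fun γ => ?_
    simpa [← hS0] using opNormA_pencil_le hA hT hS 0 γ
  · rw [← Metric.cobounded_eq_cocompact]
    filter_upwards [tendsto_norm_cobounded_atTop.eventually_ge_atTop
      (2 * opNormA A T / opNormA A S)] with γ hγ
    have hlarge : 2 * opNormA A T ≤ ‖γ‖ * opNormA A S := (div_le_iff₀ hSpos).mp hγ
    linarith [norm_mul_opNormA_le_pencil hA hT hS γ]

end Pencil

theorem stmt12 [CompleteSpace H] (A T S : H →L[ℂ] H) (hA : A.IsPositive)
    (hT : ABounded A T) (hS : ABounded A S) :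
    ∃ ζ₀ : ℂ, opNormA A (T + ζ₀ • S) = ⨅ γ : ℂ, opNormA A (T + γ • S) := by
  obtain ⟨ζ₀, hmin⟩ := (lipschitzWith_opNormA_pencil hA hT hS).continuous.exists_forall_le' 0
    (by simpa using eventually_opNormA_le_pencil hA hT hS)
  have hbdd : BddBelow (Set.range fun γ : ℂ => opNormA A (T + γ • S)) :=
    ⟨0, Set.forall_mem_range.2 fun _ => opNormA_nonneg⟩
  exact ⟨ζ₀, le_antisymm (le_ciInf hmin) (ciInf_le hbdd ζ₀)⟩
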